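/- arXiv:1105.5055 — 4 statements merged into one kernel-verified Lean document; each statement's English description precedes it below -/
import Mathlib

section
/- If F is reachable from S₀ in the automaton, then the antichain algorithm detects it: there exists k such that R̃ₖ ∩ F ≠ ∅, where R̃₀ = {S₀} and R̃ᵢ = Max⪰(R̃ᵢ₋₁ ∪ Post(R̃ᵢ₋₁)). -/
def Post {V : Type*} (E : V → V → Prop) (B : Set V) : Set V :=
  {s' | ∃ s ∈ B, E s s'}

/-- `sim` is a simulation relation for the automaton `⟨V, E, S₀, F⟩`. -/
def IsSimulation {V : Type*} (E : V → V → Prop) (F : Set V)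
    (sim : V → V → Prop) : Prop :=
  (∀ s, sim s s) ∧
  (∀ a b c, sim a b → sim b c → sim a c) ∧
  (∀ S1 S2 S3, E S1 S2 → sim S3 S1 → ∃ S4, E S3 S4 ∧ sim S4 S2) ∧
  (∀ S1 S2, sim S1 S2 → S2 ∈ F → S1 ∈ F)

/-- Maximal elements of `B` w.r.t. the preorder `sim`. -/
def MaxElt {V : Type*} (sim : V → V → Prop) (B : Set V) : Set V :=
  {S ∈ B | ¬ ∃ S' ∈ B, sim S' S ∧ ¬ sim S S'}

/-- Breadth-first iterates `R₀ = {S₀}`, `Rᵢ₊₁ = Rᵢ ∪ Post(Rᵢ)`. -/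
def Riter {V : Type*} (E : V → V → Prop) (S0 : V) : ℕ → Set V
  | 0 => {S0}
  | i + 1 => Riter E S0 i ∪ Post E (Riter E S0 i)

/-- Antichain breadth-first iterates `R̃₀ = {S₀}`, `R̃ᵢ₊₁ = Max(R̃ᵢ ∪ Post(R̃ᵢ))`. -/
def Rtiter {V : Type*} (E : V → V → Prop) (sim : V → V → Prop) (S0 : V) :
    ℕ → Set V
  | 0 => {S0}
  | i + 1 => MaxElt sim (Rtiter E sim S0 i ∪ Post E (Rtiter E sim S0 i))

/-! Every state of the breadth-first layer `Rₖ` is simulated by a state of the antichain layer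
`R̃ₖ`: pruning to `Max⪰` keeps, for each discarded state, a state simulating it, and the
simulation property lifts every `Post` step. Since acceptance is inherited along the simulation,
an accepting state reached in `Rₖ` forces an accepting state in `R̃ₖ`. -/

namespace IsSimulation

variable {V : Type*} {E : V → V → Prop} {F : Set V} {sim : V → V → Prop}

lemma refl (hsim : IsSimulation E F sim) (s : V) : sim s s := hsim.1 s

lemma trans (hsim : IsSimulation E F sim) {a b c : V} (hab : sim a b) (hbc : sim b c) :
    sim a c :=
  hsim.2.1 a b c hab hbc

lemma exists_step (hsim : IsSimulation E F sim) {s s' t : V} (hE : E s s') (hts : sim t s) :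
    ∃ t', E t t' ∧ sim t' s' :=
  hsim.2.2.1 s s' t hE hts

lemma mem_of_sim (hsim : IsSimulation E F sim) {t s : V} (hts : sim t s) (hs : s ∈ F) : t ∈ F :=
  hsim.2.2.2 t s hts hs

end IsSimulation

lemma exists_mem_maxElt_sim {V : Type*} [Finite V] {sim : V → V → Prop}
    (hrefl : ∀ s, sim s s) (htrans : ∀ a b c, sim a b → sim b c → sim a c)
    {B : Set V} {x : V} (hx : x ∈ B) : ∃ m ∈ MaxElt sim B, sim m x := by
  let strict : V → V → Prop := fun a b => sim a b ∧ ¬ sim b a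
  have : IsTrans V strict :=
    ⟨fun a b c hab hbc => ⟨htrans _ _ _ hab.1 hbc.1, fun hca => hbc.2 (htrans _ _ _ hca hab.1)⟩⟩
  have : Std.Irrefl strict := ⟨fun a h => h.2 (hrefl a)⟩
  obtain ⟨m, ⟨hmB, hmx⟩, hmin⟩ := (Finite.wellFounded_of_trans_of_irrefl strict).has_min
    {y | y ∈ B ∧ sim y x} ⟨x, hx, hrefl x⟩
  refine ⟨m, ⟨hmB, ?_⟩, hmx⟩
  rintro ⟨y, hyB, hym, hmy⟩
  exact hmin y ⟨hyB, htrans _ _ _ hym hmx⟩ ⟨hym, hmy⟩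

lemma mem_Riter_of_reflTransGen {V : Type*} {E : V → V → Prop} {S0 f : V}
    (h : Relation.ReflTransGen E S0 f) : ∃ k, f ∈ Riter E S0 k := by
  induction h with
  | refl => exact ⟨0, rfl⟩
  | tail _ hE ih =>
    obtain ⟨k, hk⟩ := ih
    exact ⟨k + 1, Or.inr ⟨_, hk, hE⟩⟩

lemma exists_mem_Rtiter_sim_of_mem_Riter {V : Type*} [Finite V] {E : V → V → Prop} {F : Set V}
    {sim : V → V → Prop} (hsim : IsSimulation E F sim) {S0 : V} :
    ∀ {k : ℕ} {s : V}, s ∈ Riter E S0 k → ∃ t ∈ Rtiter E sim S0 k, sim t s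
  | 0, s, hs => ⟨S0, rfl, hs ▸ hsim.refl s⟩
  | k + 1, s, hs => by
    have hmax : ∀ {u}, u ∈ Rtiter E sim S0 k ∪ Post E (Rtiter E sim S0 k) →
        ∃ m ∈ Rtiter E sim S0 (k + 1), sim m u :=
      exists_mem_maxElt_sim hsim.refl fun _ _ _ => hsim.trans
    rcases hs with hs | ⟨s₀, hs₀, hE⟩
    · obtain ⟨t, ht, hts⟩ := exists_mem_Rtiter_sim_of_mem_Riter hsim hs
      obtain ⟨m, hm, hmt⟩ := hmax (Or.inl ht)
      exact ⟨m, hm, hsim.trans hmt hts⟩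
    · obtain ⟨t₀, ht₀, hts₀⟩ := exists_mem_Rtiter_sim_of_mem_Riter hsim hs₀
      obtain ⟨t, hEt, hts⟩ := hsim.exists_step hE hts₀
      obtain ⟨m, hm, hmt⟩ := hmax (Or.inr ⟨t₀, ht₀, hEt⟩)
      exact ⟨m, hm, hsim.trans hmt hts⟩

theorem stmt6 {V : Type*} [Fintype V] (E : V → V → Prop) (F : Set V)
    (sim : V → V → Prop) (hsim : IsSimulation E F sim) (S0 : V)
    (hreach : ∃ f ∈ F, Relation.ReflTransGen E S0 f) :
    ∃ k : ℕ, (Rtiter E sim S0 k ∩ F).Nonempty := by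
  obtain ⟨f, hfF, hpath⟩ := hreach
  obtain ⟨k, hk⟩ := mem_Riter_of_reflTransGen hpath
  obtain ⟨t, ht, htf⟩ := exists_mem_Rtiter_sim_of_mem_Riter hsim hk
  exact ⟨k, t, ht, hsim.mem_of_sim htf hfF⟩
end

section
/- If F is not reachable from S₀ in the automaton, then for all i, R̃ᵢ ∩ F = ∅ and the sequence R̃ᵢ eventually stabilizes (there exists k with R̃ₖ = R̃ₖ₋₁). -/
/-- With `sim t x` read as `x ≤ t`, this is the lower set generated by `B`. -/
def downClosure {V : Type*} (sim : V → V → Prop) (B : Set V) : Set V :=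
  {x | ∃ t ∈ B, sim t x}

lemma maxElt_subset {V : Type*} {sim : V → V → Prop} (B : Set V) : MaxElt sim B ⊆ B :=
  fun _ h => h.1

section MaxElt

variable {V : Type*} [Finite V] (sim : V → V → Prop)

lemma wellFounded_strictly_simulates [IsTrans V sim] :
    WellFounded fun x y => sim x y ∧ ¬ sim y x := by
  have : IsTrans V fun x y => sim x y ∧ ¬ sim y x := ⟨fun _ _ _ ⟨hab, hba⟩ ⟨hbc, hcb⟩ =>
    ⟨trans_of sim hab hbc, fun hca => hcb (trans_of sim hca hab)⟩⟩
  have : Std.Irrefl fun x y => sim x y ∧ ¬ sim y x := ⟨fun _ h => h.2 h.1⟩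
  exact Finite.wellFounded_of_trans_of_irrefl _

lemma exists_mem_maxElt_sim_s7 [IsPreorder V sim] {B : Set V} {s : V} (hs : s ∈ B) :
    ∃ m ∈ MaxElt sim B, sim m s := by
  obtain ⟨m, ⟨hmB, hms⟩, hmin⟩ :=
    (wellFounded_strictly_simulates sim).has_min {x ∈ B | sim x s} ⟨s, hs, refl_of sim s⟩
  refine ⟨m, ⟨hmB, ?_⟩, hms⟩
  rintro ⟨S', hS'B, hS'm, hmS'⟩
  exact hmin S' ⟨hS'B, trans_of sim hS'm hms⟩ ⟨hS'm, hmS'⟩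

end MaxElt

section Rtiter

variable {V : Type*} {E : V → V → Prop} {sim : V → V → Prop} {S0 : V}

lemma Rtiter_subset_reachable (i : ℕ) :
    Rtiter E sim S0 i ⊆ {s | Relation.ReflTransGen E S0 s} := by
  induction i with
  | zero => rintro x rfl; exact .refl
  | succ n ih =>
    intro x hx
    rcases maxElt_subset _ hx with h | ⟨s, hs, hsx⟩
    · exact ih h
    · exact (ih hs).tail hsx

lemma Rtiter_inter_eq_empty {F : Set V} (hunreach : ¬ ∃ f ∈ F, Relation.ReflTransGen E S0 f)
    (i : ℕ) : Rtiter E sim S0 i ∩ F = ∅ :=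
  Set.eq_empty_of_forall_notMem fun x ⟨hx, hxF⟩ =>
    hunreach ⟨x, hxF, Rtiter_subset_reachable i hx⟩

variable [Finite V] [IsPreorder V sim]

lemma monotone_downClosure_Rtiter : Monotone fun i => downClosure sim (Rtiter E sim S0 i) :=
  monotone_nat_of_le_succ fun _ _ ⟨_, ht, htx⟩ =>
    let ⟨m, hm, hmt⟩ := exists_mem_maxElt_sim_s7 sim (Set.mem_union_left (Post E _) ht)
    ⟨m, hm, trans_of sim hmt htx⟩

lemma Rtiter_succ_subset_of_downClosure_subset {i : ℕ}
    (h : downClosure sim (Rtiter E sim S0 (i + 2)) ⊆ downClosure sim (Rtiter E sim S0 (i + 1))) :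
    Rtiter E sim S0 (i + 1) ⊆ Rtiter E sim S0 (i + 2) := by
  intro s hs
  refine ⟨Or.inl hs, ?_⟩
  rintro ⟨t, htB, hts, hst⟩
  obtain ⟨m, hm, hmt⟩ := exists_mem_maxElt_sim_s7 sim htB
  obtain ⟨u, hu, hut⟩ := h ⟨m, hm, hmt⟩
  exact hs.2 ⟨u, maxElt_subset _ hu, trans_of sim hut hts, fun hsu => hst (trans_of sim hsu hut)⟩

lemma exists_Rtiter_succ_eq : ∃ k, Rtiter E sim S0 (k + 1) = Rtiter E sim S0 k := by
  obtain ⟨i, hi⟩ := WellFoundedGT.monotone_chain_condition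
    ⟨_, monotone_downClosure_Rtiter (E := E) (sim := sim) (S0 := S0)⟩
  have hmono : Monotone fun n => Rtiter E sim S0 (i + n + 1) :=
    monotone_nat_of_le_succ fun n => Rtiter_succ_subset_of_downClosure_subset (i := i + n) <| by
      simp only [OrderHom.coe_mk] at hi
      rw [← hi (i + n + 2) (by omega), ← hi (i + n + 1) (by omega)]
  obtain ⟨n, hn⟩ := WellFoundedGT.monotone_chain_condition ⟨_, hmono⟩
  exact ⟨i + n + 1, (hn (n + 1) n.le_succ).symm⟩

end Rtiter

theorem stmt7 {V : Type*} [Fintype V] (E : V → V → Prop) (F : Set V)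
    (sim : V → V → Prop) (hsim : IsSimulation E F sim) (S0 : V)
    (hunreach : ¬ ∃ f ∈ F, Relation.ReflTransGen E S0 f) :
    (∀ i : ℕ, Rtiter E sim S0 i ∩ F = ∅) ∧
    (∃ k : ℕ, Rtiter E sim S0 (k + 1) = Rtiter E sim S0 k) := by
  obtain ⟨hrefl, htrans, -, -⟩ := hsim
  have : IsPreorder V sim := { refl := hrefl, trans := htrans }
  exact ⟨Rtiter_inter_eq_empty hunreach, exists_Rtiter_succ_eq⟩
end

section
/- The idle tasks preorder is preserved under request transitions: if S₂ ⪰_idle S₁ and S₁ →^{τ'} S̄₁ for some τ' ⊆ Eligible(S₁), then the unique state S̄₂ with S₂ →^{τ'} S̄₂ satisfies S̄₂ ⪰_idle S̄₁. -/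
/-- A system state of a task system with `n` tasks: each task has an
earliest next arrival time `nat` and a remaining computation time `rct`. -/
structure SysState (n : ℕ) where
  nat : Fin n → ℕ
  rct : Fin n → ℕ

/-- The set of active tasks in a state. -/
def Active {n : ℕ} (S : SysState n) : Finset (Fin n) :=
  Finset.univ.filter fun i => 0 < S.rct i

/-- The set of eligible tasks in a state. -/
def Eligible {n : ℕ} (S : SysState n) : Set (Fin n) :=
  {i | S.nat i = 0 ∧ S.rct i = 0}

/-- The idle tasks preorder: `S1 ⪰_idle S2`. -/
def IdleSim {n : ℕ} (S1 S2 : SysState n) : Prop :=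
  S1.rct = S2.rct ∧
  (∀ i, S1.rct i = 0 → S1.nat i ≤ S2.nat i) ∧
  (∀ i, 0 < S1.rct i → S1.nat i = S2.nat i)

/-- Laxity of task `i` in state `S` (over the integers). -/
def lax {n : ℕ} (T D : Fin n → ℕ) (S : SysState n) (i : Fin n) : ℤ :=
  (S.nat i : ℤ) - ((T i : ℤ) - (D i : ℤ)) - (S.rct i : ℤ)

/-- Failure states: some task has negative laxity. -/
def Fail {n : ℕ} (T D : Fin n → ℕ) : Set (SysState n) :=
  {S | ∃ i, lax T D S i < 0}

/-- `S'` is the `τ'`-request successor of `S`. -/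
def ReqSucc {n : ℕ} (T C : Fin n → ℕ) (τ' : Set (Fin n))
    (S S' : SysState n) : Prop :=
  (∀ i ∈ τ', S'.nat i = T i ∧ S'.rct i = C i) ∧
  (∀ i ∉ τ', S'.nat i = S.nat i ∧ S'.rct i = S.rct i)

/-- `S'` is the clock-tick successor of `S` under scheduler `Run`. -/
def TickSucc {n : ℕ} (Run : SysState n → Finset (Fin n))
    (S S' : SysState n) : Prop :=
  (∀ i ∈ Run S, S'.rct i = S.rct i - 1) ∧
  (∀ i ∉ Run S, S'.rct i = S.rct i) ∧
  (∀ i, S'.nat i = S.nat i - 1)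

/-- `Run` is a valid scheduler on `m` processors. -/
def IsScheduler {n : ℕ} (m : ℕ) (Run : SysState n → Finset (Fin n)) : Prop :=
  ∀ S, Run S ⊆ Active S ∧ (Run S).card ≤ m

/-- `Run` is memoryless. -/
def Memoryless {n : ℕ} (Run : SysState n → Finset (Fin n)) : Prop :=
  ∀ S1 S2 : SysState n, Active S1 = Active S2 →
    (∀ i ∈ Active S1, S1.nat i = S2.nat i ∧ S1.rct i = S2.rct i) →
    Run S1 = Run S2

/-- Edge relation of the automaton `A(τ, Run)`: a request transition
followed by a clock tick. -/
def Edge {n : ℕ} (T C : Fin n → ℕ) (Run : SysState n → Finset (Fin n))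
    (S1 S2 : SysState n) : Prop :=
  ∃ (S' : SysState n) (τ' : Set (Fin n)), τ' ⊆ Eligible S1 ∧
    ReqSucc T C τ' S1 S' ∧ TickSucc Run S' S2

theorem idleSim_iff_forall {n : ℕ} {S S' : SysState n} :
    IdleSim S S' ↔ ∀ i, S.rct i = S'.rct i ∧ (S.rct i = 0 → S.nat i ≤ S'.nat i) ∧
      (0 < S.rct i → S.nat i = S'.nat i) := by
  simp only [IdleSim, funext_iff, ← forall_and]

theorem stmt12_general {n : ℕ} (T C : Fin n → ℕ) (τ' : Set (Fin n))
    (S1 S2 Sb1 Sb2 : SysState n) (h : IdleSim S2 S1)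
    (h1 : ReqSucc T C τ' S1 Sb1) (h2 : ReqSucc T C τ' S2 Sb2) :
    IdleSim Sb2 Sb1 := by
  rw [idleSim_iff_forall] at h ⊢
  intro i
  by_cases hi : i ∈ τ'
  · obtain ⟨hn1, hr1⟩ := h1.1 i hi
    obtain ⟨hn2, hr2⟩ := h2.1 i hi
    simp [hn1, hr1, hn2, hr2]
  · obtain ⟨hn1, hr1⟩ := h1.2 i hi
    obtain ⟨hn2, hr2⟩ := h2.2 i hi
    rw [hn1, hr1, hn2, hr2]
    exact h i

theorem stmt12 {n : ℕ} (T C : Fin n → ℕ) (τ' : Set (Fin n))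
    (S1 S2 Sb1 Sb2 : SysState n) (h : IdleSim S2 S1)
    (hτ : τ' ⊆ Eligible S1)
    (h1 : ReqSucc T C τ' S1 Sb1) (h2 : ReqSucc T C τ' S2 Sb2) :
    IdleSim Sb2 Sb1 :=
  stmt12_general T C τ' S1 S2 Sb1 Sb2 h h1 h2
end

section
/- The idle tasks preorder is preserved under clock-tick transitions for memoryless schedulers: if S̄₂ ⪰_idle S̄₁ and Run is memoryless, then the clock-tick successors S₁' and S₂' of S̄₁ and S̄₂ under Run satisfy S₂' ⪰_idle S₁'. -/
/-!
Two states related by `⪰_idle` differ only in the `nat` of idle tasks, so they have the same active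
tasks with the same `nat` and `rct`; a memoryless scheduler therefore runs the
same tasks in both. A clock tick then changes `rct` identically in both states, and it decrements
`nat`, which preserves `≤`. A task active after the tick was active before it, so equality of its
`nat` survives as well.
-/

theorem IdleSim.nat_le {n : ℕ} {S₁ S₂ : SysState n} (h : IdleSim S₁ S₂) (i : Fin n) :
    S₁.nat i ≤ S₂.nat i := by
  rcases Nat.eq_zero_or_pos (S₁.rct i) with hi | hi
  · exact h.2.1 i hi
  · exact (h.2.2 i hi).le

theorem IdleSim.active_eq {n : ℕ} {S₁ S₂ : SysState n} (h : IdleSim S₁ S₂) :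
    Active S₁ = Active S₂ := by
  simp only [Active, h.1]

theorem Memoryless.run_eq_of_idleSim {n : ℕ} {Run : SysState n → Finset (Fin n)}
    (hmem : Memoryless Run) {S₁ S₂ : SysState n} (h : IdleSim S₁ S₂) : Run S₁ = Run S₂ :=
  hmem S₁ S₂ h.active_eq fun i hi =>
    ⟨h.2.2 i (Finset.mem_filter.1 hi).2, congrFun h.1 i⟩

namespace TickSucc

variable {n : ℕ} {Run Run' : SysState n → Finset (Fin n)} {S S' T T' : SysState n}

theorem rct_le (h : TickSucc Run S S') (i : Fin n) : S'.rct i ≤ S.rct i := by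
  by_cases hi : i ∈ Run S
  · rw [h.1 i hi]
    exact Nat.sub_le _ _
  · rw [h.2.1 i hi]

theorem rct_eq (hS : TickSucc Run S S') (hT : TickSucc Run' T T') (hrun : Run S = Run' T)
    (hrct : S.rct = T.rct) : S'.rct = T'.rct := by
  funext i
  by_cases hi : i ∈ Run S
  · rw [hS.1 i hi, hT.1 i (hrun ▸ hi), hrct]
  · rw [hS.2.1 i hi, hT.2.1 i (hrun ▸ hi), hrct]

end TickSucc

theorem IdleSim.tickSucc {n : ℕ} {Run Run' : SysState n → Finset (Fin n)}
    {S T S' T' : SysState n} (h : IdleSim S T) (hrun : Run S = Run' T)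
    (hS : TickSucc Run S S') (hT : TickSucc Run' T T') : IdleSim S' T' := by
  refine ⟨hS.rct_eq hT hrun h.1, fun i _ => ?_, fun i hi => ?_⟩
  · rw [hS.2.2, hT.2.2]
    exact Nat.sub_le_sub_right (h.nat_le i) 1
  · rw [hS.2.2, hT.2.2, h.2.2 i (hi.trans_le (hS.rct_le i))]

theorem stmt13_general {n : ℕ} (Run : SysState n → Finset (Fin n))
    (hmem : Memoryless Run)
    (Sb1 Sb2 S1' S2' : SysState n) (h : IdleSim Sb2 Sb1)
    (h1 : TickSucc Run Sb1 S1') (h2 : TickSucc Run Sb2 S2') :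
    IdleSim S2' S1' :=
  h.tickSucc (hmem.run_eq_of_idleSim h) h2 h1

theorem stmt13 {n m : ℕ} (Run : SysState n → Finset (Fin n))
    (hRun : IsScheduler m Run) (hmem : Memoryless Run)
    (Sb1 Sb2 S1' S2' : SysState n) (h : IdleSim Sb2 Sb1)
    (h1 : TickSucc Run Sb1 S1') (h2 : TickSucc Run Sb2 S2') :
    IdleSim S2' S1' :=
  stmt13_general Run hmem Sb1 Sb2 S1' S2' h h1 h2
end
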